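/- Let g be a Lie algebra over a field k, X = k⊕g with q((a,x)⊗(b,y)) = (ab, bx+[x,y]). Define q̃((a,x)⊗(b,y)) = (ab, bx−[x,y]). Then q̃(q⊗1)(1⊗Δ) = q(q̃⊗1)(1⊗Δ) = 1⊗ε, i.e. for all (a,x),(b,y): q̃(q((a,x)⊗(b,y)^{(1)})⊗(b,y)^{(2)}) = b·(a,x) and likewise with q and q̃ exchanged, where Δ(b,y) = (b,y)⊗(1,0)+(1,0)⊗(0,y) and ε(b,y) = b. Hence q is invertible in the rack-object sense. -/
import Mathlib


variable {k : Type*} [Field k] {L : Type*} [LieRing L] [LieAlgebra k L]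

/-- The operation `q((a,x)⊗(b,y)) = (ab, b•x + ⁅x,y⁆)`. -/
def q (u v : k × L) : k × L := (u.1 * v.1, v.1 • u.2 + ⁅u.2, v.2⁆)

/-- The operation `q̃((a,x)⊗(b,y)) = (ab, b•x − ⁅x,y⁆)`. -/
def qt (u v : k × L) : k × L := (u.1 * v.1, v.1 • u.2 - ⁅u.2, v.2⁆)

/-- `q̃(q⊗1)(1⊗Δ) = q(q̃⊗1)(1⊗Δ) = 1⊗ε`, expanded in Sweedler notation for
`Δ(b,y) = (b,y)⊗(1,0) + (1,0)⊗(0,y)` and `ε(b,y) = b`: hence `q` is invertible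
in the rack-object sense. -/
theorem q_invertible (u v : k × L) :
    qt (q u v) (1, 0) + qt (q u (1, 0)) (0, v.2) = v.1 • u ∧
      q (qt u v) (1, 0) + q (qt u (1, 0)) (0, v.2) = v.1 • u := by
  constructor <;>
  · simp only [q, qt, Prod.mk_add_mk, Prod.ext_iff, Prod.smul_fst, Prod.smul_snd]
    refine ⟨by rw [smul_eq_mul]; ring, ?_⟩
    simp only [smul_zero, lie_zero, zero_lie, add_zero, one_smul, smul_eq_mul, mul_one,
      zero_add, sub_zero, ← lie_skew v.2 u.2]
    module
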